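/- arXiv:math/0503478 — 2 statements merged into one kernel-verified Lean document; each statement's English description precedes it below -/
import Mathlib

section
/- For every λ > 0 and every state x ∈ S, the optimal risk-sensitive average cost satisfies the min–max equation J*(λ,x) = min_{a ∈ A(x)} max{ J*(λ,y) : y ∈ S, p_{xy}(a) > 0 }. -/
open scoped Classical BigOperators ENNReal

namespace RiskSensitive

/-- A (history-dependent, randomized) policy for a finite MDP: given the past
(chronological list of (state, action) pairs) and the current state, it assigns a
probability weight to each action, concentrated on the admissible actions. -/
structure Policy (S A : Type*) [Fintype S] [Fintype A] (Adm : S → Finset A) where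
  toFun : List (S × A) → S → A → ℝ
  nonneg : ∀ h s a, 0 ≤ toFun h s a
  sum_one : ∀ h s, ∑ a, toFun h s a = 1
  supp : ∀ h s a, a ∉ Adm s → toFun h s a = 0

variable {S A : Type*} [Fintype S] [Fintype A]
variable (Adm : S → Finset A) (p : S → A → S → ℝ) (C : S → A → ℝ) (lam : ℝ)

/-- Probability of a finite trajectory (list of (action, next-state) pairs), given the
history so far and the current state. -/
noncomputable def pathProbAux (π : Policy S A Adm) :
    List (S × A) → S → List (A × S) → ℝ
  | _, _, [] => 1
  | hist, x, (a, y) :: rest =>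
      π.toFun hist x a * p x a y * pathProbAux π (hist ++ [(x, a)]) y rest

/-- `pathProb π x l` is `P_x^π[A_0 = a_0, X_1 = y_1, …]` for `l = [(a_0,y_1),…]`. -/
noncomputable def pathProb (π : Policy S A Adm) (x : S) (l : List (A × S)) : ℝ :=
  pathProbAux Adm p π [] x l

/-- Probability of a cylinder event depending on the first `n` (action, next-state) pairs. -/
noncomputable def cylProb (π : Policy S A Adm) (x : S) (n : ℕ)
    (E : (Fin n → A × S) → Prop) : ℝ :=
  ∑ v : Fin n → A × S, if E v then pathProb Adm p π x (List.ofFn v) else 0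

/-- The state `X_t` along the trajectory encoded by `l`, starting from `x`. -/
def stateAt (x : S) (l : List (A × S)) (t : ℕ) : S :=
  (l.take t).foldl (fun _ q => q.2) x

/-- The final state of the finite trajectory `l` started at `x`. -/
def lastState (x : S) (l : List (A × S)) : S :=
  l.foldl (fun _ q => q.2) x

/-- `Σ_t w(X_t, A_t)` along the finite trajectory `l` started at `x`. -/
def costSum (w : S → A → ℝ) : S → List (A × S) → ℝ
  | _, [] => 0
  | x, (a, y) :: rest => w x a + costSum w y rest

/-- `J_n(λ,π,x) = (1/λ) log E_x^π[exp(λ Σ_{t<n} C(X_t,A_t))]`. -/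
noncomputable def Jn (π : Policy S A Adm) (x : S) (n : ℕ) : ℝ :=
  (1 / lam) * Real.log (∑ v : Fin n → A × S,
    pathProb Adm p π x (List.ofFn v) * Real.exp (lam * costSum C x (List.ofFn v)))

/-- The risk-sensitive average cost `J(λ,π,x) = limsup_n J_n(λ,π,x)/n`. -/
noncomputable def Javg (π : Policy S A Adm) (x : S) : ℝ :=
  Filter.limsup (fun n : ℕ => Jn Adm p C lam π x n / n) Filter.atTop

/-- Optimal risk-sensitive average cost `J*(λ,x)`. -/
noncomputable def Jopt (x : S) : ℝ :=
  ⨅ π : Policy S A Adm, Javg Adm p C lam π x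

/-- `π` is `ε`-optimal at `x`. -/
def EpsOptimalAt (π : Policy S A Adm) (x : S) (ε : ℝ) : Prop :=
  Javg Adm p C lam π x ≤ Jopt Adm p C lam x + ε

/-- `FirstExit Q v` : the trajectory `v` leaves `{Q}` for the first time exactly at its
last step, i.e. the exit time of `Q` equals `n`. -/
def FirstExit (Q : S → Prop) {n : ℕ} (v : Fin n → A × S) : Prop :=
  0 < n ∧ (∀ t : Fin n, (t : ℕ) + 1 < n → Q (v t).2) ∧
    ∀ t : Fin n, (t : ℕ) + 1 = n → ¬ Q (v t).2

/-- `E_x^π[ exp(Σ_{t<τ} w(X_t,A_t)) ]` where `τ = min{n ≥ 1 : ¬ Q (X_n)}` is the first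
exit time from `Q` (the contribution of `[τ = ∞]` is null when `τ < ∞` a.s.). -/
noncomputable def EexitExp (π : Policy S A Adm) (x : S) (Q : S → Prop)
    (w : S → A → ℝ) : ℝ≥0∞ :=
  ∑' n : ℕ, ∑ v : Fin n → A × S,
    if FirstExit Q v then
      ENNReal.ofReal (pathProb Adm p π x (List.ofFn v) *
        Real.exp (costSum w x (List.ofFn v)))
    else 0

/-- `E_x^π[ exp(Σ_{t<T} w(X_t,A_t)) ]` with `T` the first positive arrival time to `z`. -/
noncomputable def EhitExp (π : Policy S A Adm) (x z : S) (w : S → A → ℝ) : ℝ≥0∞ :=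
  EexitExp Adm p π x (fun y => y ≠ z) w

/-- `E_x^π[T]`, the expected first positive arrival time to `z`, computed as
`Σ_{n≥0} P_x^π[T > n]`. -/
noncomputable def ExpT (π : Policy S A Adm) (x z : S) : ℝ≥0∞ :=
  ∑' n : ℕ, ENNReal.ofReal
    (cylProb Adm p π x n (fun v => ∀ t : Fin n, (v t).2 ≠ z))

/-- `P_x^π[T > n]`, the probability that `z` is not visited during the first `n` steps. -/
noncomputable def survProb (π : Policy S A Adm) (x z : S) (n : ℕ) : ℝ :=
  cylProb Adm p π x n (fun v => ∀ t : Fin n, (v t).2 ≠ z)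

/-- The stationary policy induced by a choice function `f ∈ 𝔽`. -/
noncomputable def stationary (f : S → A) (hf : ∀ s, f s ∈ Adm s) : Policy S A Adm where
  toFun := fun _ s a => if a = f s then 1 else 0
  nonneg := by intro h s a; (try dsimp only); split <;> norm_num
  sum_one := by intro h s; simp
  supp := by
    intro h s a ha
    try dsimp only
    rw [if_neg]
    intro hEq
    exact ha (hEq ▸ hf s)

/-- The simultaneous Doeblin condition: `E_x^f[T] ≤ M` for every state `x` and every
stationary policy `f`, where `T` is the first positive arrival time to `z`. -/
def Doeblin (z : S) (M : ℝ) : Prop :=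
  0 < M ∧ ∀ (x : S) (f : S → A) (hf : ∀ s, f s ∈ Adm s),
    ExpT Adm p (stationary Adm f hf) x z ≤ ENNReal.ofReal M

/-- `B_g(x) = {a ∈ A(x) : g(x) = max{g(y) : p_{xy}(a) > 0}}`. -/
def Bg (g : S → ℝ) (x : S) : Set A :=
  {a | a ∈ Adm x ∧ g x = sSup (g '' {y | 0 < p x a y})}

/-- The family `𝒢` of functions characterizing `J*(λ,·)`. -/
def Gclass : Set (S → ℝ) :=
  {g | (∀ x, g x = sInf ((fun a => sSup (g '' {y | 0 < p x a y})) '' (Adm x : Set A))) ∧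
    ∃ h : S → ℝ, ∀ x,
      sInf ((fun a => Real.exp (lam * C x a) * ∑ y, p x a y * Real.exp (lam * h y)) ''
        Bg Adm p g x) ≤ Real.exp (lam * g x + lam * h x)}

/-- The class `𝒫*` of policies which always select actions in `B*(X_t)`. -/
def Pstar : Set (Policy S A Adm) :=
  {π | ∀ (x : S) (t : ℕ),
    cylProb Adm p π x (t + 1)
      (fun v => (v (Fin.last t)).1 ∈
        Bg Adm p (Jopt Adm p C lam) (stateAt x (List.ofFn v) t)) = 1}

/-- The deviation function
`h(x) = inf_{π ∈ 𝒫*} (1/λ) log E_x^π[exp(λα Σ_{t<T}(C(X_t,A_t) − J*(λ,X_t)))]`. -/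
noncomputable def hdev (z : S) (α : ℝ) (x : S) : EReal :=
  ⨅ π ∈ Pstar Adm p C lam, ((lam⁻¹ : ℝ) : EReal) *
    ENNReal.log (EhitExp Adm p π x z
      (fun s a => lam * α * (C s a - Jopt Adm p C lam s)))

/-- `ψ(ε) = (1/λ) inf_{δ∈𝒫*} log E_z^δ[exp(λ Σ_{t<T}(C(X_t,A_t) − γ₀ − 2ε))]`. -/
noncomputable def psi (z : S) (ε : ℝ) : EReal :=
  ((lam⁻¹ : ℝ) : EReal) * ⨅ π ∈ Pstar Adm p C lam,
    ENNReal.log (EhitExp Adm p π z z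
      (fun s a => lam * (C s a - Jopt Adm p C lam z - 2 * ε)))

/-- `ξ₀ = −(1−α) log β / (λα)`. -/
noncomputable def xi0 (α β : ℝ) : ℝ := -((1 - α) * Real.log β) / (lam * α)

/-- `ξ₁`: 1 if `J*(λ,·)` is constant, otherwise the minimum gap between distinct
values of `J*(λ,·)`. -/
noncomputable def xi1 : ℝ :=
  if ∀ u v : S, Jopt Adm p C lam u = Jopt Adm p C lam v then 1
  else sInf {d | ∃ u v : S, Jopt Adm p C lam u < Jopt Adm p C lam v ∧
    d = Jopt Adm p C lam v - Jopt Adm p C lam u}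

/-- `ξ = min{ξ₀, ξ₁}`. -/
noncomputable def xi (α β : ℝ) : ℝ := min (xi0 lam α β) (xi1 Adm p C lam)

/-- The shifted policy obtained by prefixing the fixed history `pre`. -/
def shiftPolicy (π : Policy S A Adm) (pre : List (S × A)) : Policy S A Adm where
  toFun := fun h s a => π.toFun (pre ++ h) s a
  nonneg := fun h s a => π.nonneg _ s a
  sum_one := fun h s => π.sum_one _ s
  supp := fun h s a ha => π.supp _ s a ha

/-- The history (list of (state, action) pairs) along the trajectory `l` started at `x`. -/
def histOf : S → List (A × S) → List (S × A)
  | _, [] => []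
  | x, (a, y) :: rest => (x, a) :: histOf y rest

/-!
Write `S_n(π,x) = E_x^π[exp(λ Σ_{t<n} C(X_t,A_t))]`, so that `J_n = λ⁻¹ log S_n` and
`S_{n+1}(π,x) = Σ_{a,y} π(a|x) p_{xy}(a) e^{λC(x,a)} S_n(π^{(x,a)}, y)`,
where `π^{(x,a)}` is `π` continued after a first step `(x,a)`. Costs are bounded, so
`|J_n| ≤ K n`, and the linear growth rate `limsup J_n / n` ignores a shift of the index by one
and an additive constant. If `π` plays `a` at `x` with positive probability, the recursion
bounds `S_{n+1}(π,x)` below by a positive multiple of `S_n(π^{(x,a)}, y)` for each `y` with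
`p_{xy}(a) > 0`, whence `J(λ,π,x) ≥ max_y J*(λ,y) ≥ min_a max_y J*(λ,y)`. Conversely, playing
`a` at `x` and then an `ε`-optimal policy from the state reached gives
`S_{n+1} ≤ e^{λC(x,a)} max_y S_n`, whence `J*(λ,x) ≤ max_y J*(λ,y) + ε`.
-/

open Filter LinearGrowth

lemma exists_pos_of_sum_eq_one {ι : Type*} [Fintype ι] {q : ι → ℝ} (hq : ∑ i, q i = 1) :
    ∃ i, 0 < q i := by
  obtain ⟨i, -, hi⟩ := Finset.exists_lt_of_sum_lt (s := Finset.univ) (f := fun _ ↦ 0) (g := q)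
    (by simp [hq])
  exact ⟨i, hi⟩

lemma exists_sum_mul_le {ι : Type*} [Fintype ι] {q f : ι → ℝ} (hq : ∀ i, 0 ≤ q i)
    (hq_sum : ∑ i, q i = 1) : ∃ i, 0 < q i ∧ ∑ j, q j * f j ≤ f i := by
  obtain ⟨i₀, hi₀⟩ := exists_pos_of_sum_eq_one hq_sum
  obtain ⟨i, hi, hmax⟩ :=
    Finset.exists_max_image {i | 0 < q i} f ⟨i₀, by simpa using hi₀⟩
  rw [Finset.mem_filter_univ] at hi
  refine ⟨i, hi, ?_⟩
  calc ∑ j, q j * f j ≤ ∑ j, q j * f i := Finset.sum_le_sum fun j _ ↦ by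
        rcases (hq j).eq_or_lt with hj | hj
        · simp [← hj]
        · exact mul_le_mul_of_nonneg_left (hmax j (by simpa using hj)) hj.le
    _ = f i := by rw [← Finset.sum_mul, hq_sum, one_mul]

section LinearGrowthReal

variable {u v : ℕ → ℝ} {K a b d : ℝ}

lemma abs_div_natCast_le (hu : ∀ n, |u n| ≤ K * n) (n : ℕ) : |u n / n| ≤ K := by
  rcases Nat.eq_zero_or_pos n with rfl | hn
  · simpa using (abs_nonneg (u 1)).trans ((hu 1).trans_eq (by simp))
  · rw [abs_div, Nat.abs_cast, div_le_iff₀ (by exact_mod_cast hn)]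
    exact hu n

lemma isBoundedUnder_le_div (hu : ∀ n, |u n| ≤ K * n) :
    IsBoundedUnder (· ≤ ·) atTop fun n : ℕ ↦ u n / n :=
  isBoundedUnder_of ⟨K, fun n ↦ (le_abs_self _).trans (abs_div_natCast_le hu n)⟩

lemma isCoboundedUnder_le_div (hu : ∀ n, |u n| ≤ K * n) :
    IsCoboundedUnder (· ≤ ·) atTop fun n : ℕ ↦ u n / n :=
  isCoboundedUnder_le_of_le atTop fun n ↦ neg_le_of_abs_le (abs_div_natCast_le hu n)

lemma neg_le_linearGrowthSup (hu : ∀ n, |u n| ≤ K * n) : -K ≤ linearGrowthSup u :=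
  le_limsup_of_frequently_le
    (Frequently.of_forall fun n ↦ neg_le_of_abs_le (abs_div_natCast_le hu n))
    (isBoundedUnder_le_div hu)

lemma linearGrowthSup_le_of_forall_eventually (hu : ∀ n, |u n| ≤ K * n)
    (h : ∀ b > a, ∀ᶠ n : ℕ in atTop, u n ≤ b * n) : linearGrowthSup u ≤ a := by
  refine le_of_forall_gt fun b hb ↦ ?_
  obtain ⟨b', hab', hb'b⟩ := exists_between hb
  refine (limsup_le_of_le (isCoboundedUnder_le_div hu) ?_).trans_lt hb'b
  filter_upwards [h b' hab', eventually_gt_atTop 0] with n hle hn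
  rwa [div_le_iff₀ (by exact_mod_cast hn)]

lemma eventually_le_mul_of_linearGrowthSup_lt (hu : ∀ n, |u n| ≤ K * n)
    (h : linearGrowthSup u < b) : ∀ᶠ n : ℕ in atTop, u n ≤ b * n := by
  filter_upwards [eventually_lt_of_limsup_lt h (isBoundedUnder_le_div hu),
    eventually_gt_atTop 0] with n hlt hn
  exact ((div_lt_iff₀ (by exact_mod_cast hn)).1 hlt).le

lemma eventually_mul_add_le_mul (h : a < b) (d : ℝ) :
    ∀ᶠ n : ℕ in atTop, a * n + d ≤ b * n := by
  have hgap := tendsto_natCast_atTop_atTop.const_mul_atTop (sub_pos.2 h)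
  filter_upwards [hgap.eventually_ge_atTop d] with n hn
  linarith

lemma linearGrowthSup_le_of_add_le_succ {K' : ℝ} (hu : ∀ n, |u n| ≤ K * n)
    (hv : ∀ n, |v n| ≤ K' * n) (h : ∀ n, u n + d ≤ v (n + 1)) :
    linearGrowthSup u ≤ linearGrowthSup v := by
  refine linearGrowthSup_le_of_forall_eventually hu fun b hb ↦ ?_
  obtain ⟨b', hvb', hb'b⟩ := exists_between hb
  filter_upwards [(tendsto_add_atTop_nat 1).eventually
      (eventually_le_mul_of_linearGrowthSup_lt hv hvb'),
    eventually_mul_add_le_mul hb'b (b' - d)] with n hv hb'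
  push_cast at hv
  linarith [h n]

lemma linearGrowthSup_le_of_succ_le_add {ι : Type*} [Finite ι] {v : ι → ℕ → ℝ} {K' : ℝ}
    (hu : ∀ n, |u n| ≤ K * n) (hv : ∀ i n, |v i n| ≤ K' * n)
    (hva : ∀ i, linearGrowthSup (v i) ≤ a) (h : ∀ n, ∃ i, u (n + 1) ≤ v i n + d) :
    linearGrowthSup u ≤ a := by
  refine linearGrowthSup_le_of_forall_eventually hu fun b hb ↦ ?_
  obtain ⟨b', hab', hb'b⟩ := exists_between hb
  have hvb' : ∀ᶠ n in atTop, ∀ i, v i n ≤ b' * n := eventually_all.2 fun i ↦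
    eventually_le_mul_of_linearGrowthSup_lt (hv i) ((hva i).trans_lt hab')
  have hsucc : ∀ᶠ n : ℕ in atTop, u (n + 1) ≤ b * (n + 1 : ℕ) := by
    filter_upwards [hvb', eventually_mul_add_le_mul hb'b (d - b')] with n hvn hb'
    obtain ⟨i, hi⟩ := h n
    push_cast
    linarith [hvn i]
  rw [← map_add_atTop_eq_nat 1]
  exact hsucc

end LinearGrowthReal

def IsStochastic : Prop :=
  ∀ x, ∀ a ∈ Adm x, (∀ y, 0 ≤ p x a y) ∧ ∑ y, p x a y = 1

/-- `E_x^π[exp(λ Σ_{t<n} w(X_t,A_t))]`, the argument of the logarithm in `Jn`. -/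
noncomputable def expCost (w : S → A → ℝ) (π : Policy S A Adm) (x : S) (n : ℕ) : ℝ :=
  ∑ v : Fin n → A × S,
    pathProb Adm p π x (List.ofFn v) * Real.exp (lam * costSum w x (List.ofFn v))

def firstState : List (S × A) → S → S
  | [], s => s
  | q :: _, _ => q.1

/-- Play `π₀` at time `0`, then from time `1` on follow `Ps X₁`, fed with the history since
time `1`. -/
noncomputable def firstStepThen (π₀ : Policy S A Adm)
    (Ps : S → Policy S A Adm) : Policy S A Adm where
  toFun
    | [], s, a => π₀.toFun [] s a
    | _ :: h, s, a => (Ps (firstState h s)).toFun h s a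
  nonneg
    | [], s, a => π₀.nonneg [] s a
    | _ :: h, s, a => (Ps (firstState h s)).nonneg h s a
  sum_one
    | [], s => π₀.sum_one [] s
    | _ :: h, s => (Ps (firstState h s)).sum_one h s
  supp
    | [], s, a => π₀.supp [] s a
    | _ :: h, s, a => (Ps (firstState h s)).supp h s a

section Trajectories

variable {Adm p lam}

lemma pathProbAux_shiftPolicy (π : Policy S A Adm) (pre : List (S × A)) :
    ∀ (h : List (S × A)) (s : S) (l : List (A × S)),
      pathProbAux Adm p (shiftPolicy Adm π pre) h s l = pathProbAux Adm p π (pre ++ h) s l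
  | _, _, [] => rfl
  | h, s, (a, y) :: rest => by
    simp only [pathProbAux, pathProbAux_shiftPolicy π pre _ y rest, List.append_assoc]
    rfl

lemma pathProbAux_firstStepThen (π₀ : Policy S A Adm) (Ps : S → Policy S A Adm) (q : S × A) :
    ∀ (h : List (S × A)) (s : S) (l : List (A × S)),
      pathProbAux Adm p (firstStepThen Adm π₀ Ps) (q :: h) s l
        = pathProbAux Adm p (Ps (firstState h s)) h s l
  | _, _, [] => rfl
  | h, s, (a, y) :: rest => by
    have hfirst : firstState (h ++ [(s, a)]) y = firstState h s := by cases h <;> rfl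
    simp only [pathProbAux, List.cons_append, pathProbAux_firstStepThen π₀ Ps q _ y rest, hfirst]
    rfl

lemma expCost_succ (w : S → A → ℝ) (π : Policy S A Adm) (x : S) (n : ℕ) :
    expCost Adm p lam w π x (n + 1) =
      ∑ a, ∑ y, π.toFun [] x a * p x a y *
        (Real.exp (lam * w x a) * expCost Adm p lam w (shiftPolicy Adm π [(x, a)]) y n) := by
  rw [expCost, ← (Fin.consEquiv fun _ : Fin (n + 1) ↦ A × S).sum_comp,
    Fintype.sum_prod_type, Fintype.sum_prod_type]
  refine Finset.sum_congr rfl fun a _ ↦ Finset.sum_congr rfl fun y _ ↦ ?_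
  rw [expCost, Finset.mul_sum, Finset.mul_sum]
  refine Finset.sum_congr rfl fun v _ ↦ ?_
  have hpath : pathProb Adm p π x ((a, y) :: List.ofFn v) = π.toFun [] x a * p x a y *
      pathProb Adm p (shiftPolicy Adm π [(x, a)]) y (List.ofFn v) := by
    rw [pathProb, pathProb, pathProbAux_shiftPolicy]
    rfl
  simp only [Fin.consEquiv_apply, List.ofFn_succ, Fin.cons_zero, Fin.cons_succ]
  rw [hpath, costSum, mul_add, Real.exp_add]
  ring

lemma expCost_shiftPolicy_firstStepThen (w : S → A → ℝ) (π₀ : Policy S A Adm)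
    (Ps : S → Policy S A Adm) (x y : S) (a : A) (n : ℕ) :
    expCost Adm p lam w (shiftPolicy Adm (firstStepThen Adm π₀ Ps) [(x, a)]) y n
      = expCost Adm p lam w (Ps y) y n := by
  refine Finset.sum_congr rfl fun v _ ↦ ?_
  rw [pathProb, pathProb, pathProbAux_shiftPolicy, List.singleton_append,
    pathProbAux_firstStepThen]
  rfl

lemma expCost_firstStepThen_stationary_succ (w : S → A → ℝ) (f : S → A)
    (hf : ∀ s, f s ∈ Adm s) (Ps : S → Policy S A Adm) (x : S) (n : ℕ) :
    expCost Adm p lam w (firstStepThen Adm (stationary Adm f hf) Ps) x (n + 1)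
      = Real.exp (lam * w x (f x)) * ∑ y, p x (f x) y * expCost Adm p lam w (Ps y) y n := by
  simp only [expCost_succ, expCost_shiftPolicy_firstStepThen]
  simp [firstStepThen, stationary, Finset.mul_sum, mul_left_comm]

lemma policy_mul_trans_nonneg (hp : IsStochastic Adm p) (π : Policy S A Adm)
    (h : List (S × A)) (x : S) (a : A) (y : S) : 0 ≤ π.toFun h x a * p x a y := by
  by_cases ha : a ∈ Adm x
  · exact mul_nonneg (π.nonneg h x a) ((hp x a ha).1 y)
  · simp [π.supp h x a ha]

lemma sum_policy_mul_trans (hp : IsStochastic Adm p) (π : Policy S A Adm)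
    (h : List (S × A)) (x : S) : ∑ a, ∑ y, π.toFun h x a * p x a y = 1 := by
  rw [← π.sum_one h x]
  refine Finset.sum_congr rfl fun a _ ↦ ?_
  by_cases ha : a ∈ Adm x
  · rw [← Finset.mul_sum, (hp x a ha).2, mul_one]
  · simp [π.supp h x a ha]

lemma sum_policy_mul_trans_mul_le (hp : IsStochastic Adm p) (π : Policy S A Adm)
    (h : List (S × A)) (x : S) {g : A → S → ℝ} {c : ℝ} (hg : ∀ a y, g a y ≤ c) :
    ∑ a, ∑ y, π.toFun h x a * p x a y * g a y ≤ c :=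
  calc _ ≤ ∑ a, ∑ y, π.toFun h x a * p x a y * c :=
        Finset.sum_le_sum fun a _ ↦ Finset.sum_le_sum fun y _ ↦
          mul_le_mul_of_nonneg_left (hg a y) (policy_mul_trans_nonneg hp π h x a y)
    _ = c := by simp only [← Finset.sum_mul, sum_policy_mul_trans hp, one_mul]

lemma le_sum_policy_mul_trans_mul (hp : IsStochastic Adm p) (π : Policy S A Adm)
    (h : List (S × A)) (x : S) {g : A → S → ℝ} {c : ℝ} (hg : ∀ a y, c ≤ g a y) :
    c ≤ ∑ a, ∑ y, π.toFun h x a * p x a y * g a y :=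
  calc c = ∑ a, ∑ y, π.toFun h x a * p x a y * c := by
        simp only [← Finset.sum_mul, sum_policy_mul_trans hp, one_mul]
    _ ≤ _ := Finset.sum_le_sum fun a _ ↦ Finset.sum_le_sum fun y _ ↦
        mul_le_mul_of_nonneg_left (hg a y) (policy_mul_trans_nonneg hp π h x a y)

lemma exp_neg_le_expCost_le_exp (hp : IsStochastic Adm p) (hlam : 0 ≤ lam) {w : S → A → ℝ}
    {K : ℝ} (hK : ∀ s a, |w s a| ≤ K) (n : ℕ) (π : Policy S A Adm) (x : S) :
    Real.exp (-(lam * (K * n))) ≤ expCost Adm p lam w π x n ∧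
      expCost Adm p lam w π x n ≤ Real.exp (lam * (K * n)) := by
  induction n generalizing π x with
  | zero => simp [expCost, pathProb, pathProbAux, costSum]
  | succ n ih =>
    have hexp : ∀ a, Real.exp (-(lam * K)) ≤ Real.exp (lam * w x a) ∧
        Real.exp (lam * w x a) ≤ Real.exp (lam * K) := fun a ↦ by
      obtain ⟨hlo, hhi⟩ := abs_le.1 (hK x a)
      exact ⟨Real.exp_le_exp.2 (by nlinarith), Real.exp_le_exp.2 (by nlinarith)⟩
    rw [expCost_succ]
    constructor
    · refine le_sum_policy_mul_trans_mul hp π [] x fun a y ↦ ?_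
      rw [show -(lam * (K * ↑(n + 1))) = -(lam * K) + -(lam * (K * n)) by push_cast; ring,
        Real.exp_add]
      exact mul_le_mul (hexp a).1 (ih _ y).1 (Real.exp_pos _).le (Real.exp_pos _).le
    · refine sum_policy_mul_trans_mul_le hp π [] x fun a y ↦ ?_
      rw [show lam * (K * ↑(n + 1)) = lam * K + lam * (K * n) by push_cast; ring, Real.exp_add]
      exact mul_le_mul (hexp a).2 (ih _ y).2 ((Real.exp_pos _).le.trans (ih _ y).1)
        (Real.exp_pos _).le

lemma exists_policy_pos (π : Policy S A Adm) (h : List (S × A)) (x : S) :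
    ∃ a ∈ Adm x, 0 < π.toFun h x a := by
  obtain ⟨a, ha⟩ := exists_pos_of_sum_eq_one (π.sum_one h x)
  exact ⟨a, by_contra fun hadm ↦ ha.ne' (π.supp h x a hadm), ha⟩

end Trajectories

lemma exists_abs_cost_le : ∃ K, ∀ s a, |C s a| ≤ K := by
  obtain ⟨K, hK⟩ := (Set.finite_range fun q : S × A ↦ |C q.1 q.2|).bddAbove
  exact ⟨K, fun s a ↦ hK ⟨(s, a), rfl⟩⟩

section Costs

variable {Adm p C lam}

lemma Jn_eq_log_expCost (π : Policy S A Adm) (x : S) (n : ℕ) :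
    Jn Adm p C lam π x n = 1 / lam * Real.log (expCost Adm p lam C π x n) := rfl

lemma expCost_pos (hp : IsStochastic Adm p) (hlam : 0 ≤ lam) (π : Policy S A Adm) (x : S)
    (n : ℕ) : 0 < expCost Adm p lam C π x n := by
  obtain ⟨K, hK⟩ := exists_abs_cost_le C
  exact (Real.exp_pos _).trans_le (exp_neg_le_expCost_le_exp hp hlam hK n π x).1

lemma abs_Jn_le (hp : IsStochastic Adm p) (hlam : 0 < lam) {K : ℝ} (hK : ∀ s a, |C s a| ≤ K)
    (π : Policy S A Adm) (x : S) (n : ℕ) : |Jn Adm p C lam π x n| ≤ K * n := by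
  obtain ⟨hlo, hhi⟩ := exp_neg_le_expCost_le_exp hp hlam.le hK n π x
  have hlog : |Real.log (expCost Adm p lam C π x n)| ≤ lam * (K * n) := abs_le.2
    ⟨(Real.le_log_iff_exp_le ((Real.exp_pos _).trans_le hlo)).2 hlo,
      (Real.log_le_iff_le_exp ((Real.exp_pos _).trans_le hlo)).2 hhi⟩
  rw [Jn_eq_log_expCost, abs_mul, abs_of_pos (one_div_pos.2 hlam), one_div,
    inv_mul_le_iff₀ hlam]
  exact hlog

lemma Jn_shiftPolicy_add_le (hp : IsStochastic Adm p) (hlam : 0 < lam) {π : Policy S A Adm}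
    {x y : S} {a : A} (ha : 0 < π.toFun [] x a) (hy : 0 < p x a y) (n : ℕ) :
    Jn Adm p C lam (shiftPolicy Adm π [(x, a)]) y n +
        1 / lam * Real.log (π.toFun [] x a * p x a y * Real.exp (lam * C x a))
      ≤ Jn Adm p C lam π x (n + 1) := by
  set c := π.toFun [] x a * p x a y * Real.exp (lam * C x a)
  have hc : 0 < c := by positivity
  have hterm : c * expCost Adm p lam C (shiftPolicy Adm π [(x, a)]) y n
      ≤ expCost Adm p lam C π x (n + 1) := by
    have hnonneg : ∀ a' y', 0 ≤ π.toFun [] x a' * p x a' y' * (Real.exp (lam * C x a') *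
        expCost Adm p lam C (shiftPolicy Adm π [(x, a')]) y' n) := fun a' y' ↦
      mul_nonneg (policy_mul_trans_nonneg hp π [] x a' y')
        (mul_nonneg (Real.exp_pos _).le (expCost_pos hp hlam.le _ _ _).le)
    rw [expCost_succ]
    refine le_trans ?_ (Finset.single_le_sum (fun a' _ ↦ Finset.sum_nonneg fun y' _ ↦
      hnonneg a' y') (Finset.mem_univ a))
    refine le_trans (le_of_eq ?_) (Finset.single_le_sum (fun y' _ ↦ hnonneg a y')
      (Finset.mem_univ y))
    ring
  have hlog := Real.log_le_log (mul_pos hc (expCost_pos hp hlam.le _ _ _)) hterm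
  rw [Real.log_mul hc.ne' (expCost_pos hp hlam.le _ _ _).ne'] at hlog
  rw [Jn_eq_log_expCost, Jn_eq_log_expCost]
  have := mul_le_mul_of_nonneg_left hlog (one_div_pos.2 hlam).le
  linarith

lemma Jn_firstStepThen_succ_le (hp : IsStochastic Adm p) (hlam : 0 < lam) {f : S → A}
    (hf : ∀ s, f s ∈ Adm s) (Ps : S → Policy S A Adm) (x : S) (n : ℕ) :
    ∃ y, 0 < p x (f x) y ∧ Jn Adm p C lam (firstStepThen Adm (stationary Adm f hf) Ps) x (n + 1)
      ≤ Jn Adm p C lam (Ps y) y n + C x (f x) := by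
  obtain ⟨y, hy, hle⟩ := exists_sum_mul_le (f := fun y ↦ expCost Adm p lam C (Ps y) y n)
    (hp x (f x) (hf x)).1 (hp x (f x) (hf x)).2
  refine ⟨y, hy, ?_⟩
  have hpos := expCost_pos (C := C) hp hlam.le (Ps y) y n
  have hlog :
      Real.log (expCost Adm p lam C (firstStepThen Adm (stationary Adm f hf) Ps) x (n + 1))
        ≤ lam * C x (f x) + Real.log (expCost Adm p lam C (Ps y) y n) := by
    have hκ := expCost_pos (C := C) hp hlam.le (firstStepThen Adm (stationary Adm f hf) Ps) x
      (n + 1)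
    rw [expCost_firstStepThen_stationary_succ] at hκ ⊢
    have := Real.log_le_log hκ (mul_le_mul_of_nonneg_left hle (Real.exp_pos _).le)
    rwa [Real.log_mul (Real.exp_pos _).ne' hpos.ne', Real.log_exp] at this
  rw [Jn_eq_log_expCost, Jn_eq_log_expCost]
  have := mul_le_mul_of_nonneg_left hlog (one_div_pos.2 hlam).le
  rw [mul_add, ← mul_assoc, one_div_mul_cancel hlam.ne', one_mul] at this
  linarith

end Costs

section Optimal

variable {Adm p C lam}

lemma Javg_shiftPolicy_le (hp : IsStochastic Adm p) (hlam : 0 < lam) {π : Policy S A Adm}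
    {x y : S} {a : A} (ha : 0 < π.toFun [] x a) (hy : 0 < p x a y) :
    Javg Adm p C lam (shiftPolicy Adm π [(x, a)]) y ≤ Javg Adm p C lam π x := by
  obtain ⟨K, hK⟩ := exists_abs_cost_le C
  exact linearGrowthSup_le_of_add_le_succ (abs_Jn_le hp hlam hK _ y)
    (abs_Jn_le hp hlam hK π x) (Jn_shiftPolicy_add_le hp hlam ha hy)

lemma Javg_firstStepThen_le (hp : IsStochastic Adm p) (hlam : 0 < lam) {f : S → A}
    (hf : ∀ s, f s ∈ Adm s) (Ps : S → Policy S A Adm) {x : S} {c : ℝ}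
    (h : ∀ y, 0 < p x (f x) y → Javg Adm p C lam (Ps y) y ≤ c) :
    Javg Adm p C lam (firstStepThen Adm (stationary Adm f hf) Ps) x ≤ c := by
  obtain ⟨K, hK⟩ := exists_abs_cost_le C
  refine linearGrowthSup_le_of_succ_le_add (d := C x (f x))
    (v := fun y : {y // 0 < p x (f x) y} ↦ Jn Adm p C lam (Ps y) y) (abs_Jn_le hp hlam hK _ x)
    (fun y ↦ abs_Jn_le hp hlam hK _ y) (fun y ↦ h y y.2) fun n ↦ ?_
  obtain ⟨y, hy, hle⟩ := Jn_firstStepThen_succ_le hp hlam hf Ps x n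
  exact ⟨⟨y, hy⟩, hle⟩

lemma Jopt_le_Javg (hp : IsStochastic Adm p) (hlam : 0 < lam) (π : Policy S A Adm) (x : S) :
    Jopt Adm p C lam x ≤ Javg Adm p C lam π x := by
  obtain ⟨K, hK⟩ := exists_abs_cost_le C
  refine ciInf_le ⟨-K, ?_⟩ π
  rintro _ ⟨π', rfl⟩
  exact neg_le_linearGrowthSup (abs_Jn_le hp hlam hK π' x)

lemma policy_nonempty (hA : ∀ x, (Adm x).Nonempty) : Nonempty (Policy S A Adm) :=
  ⟨stationary Adm _ fun s ↦ (hA s).choose_spec⟩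

lemma sInf_sSup_le_Jopt (hA : ∀ x, (Adm x).Nonempty) (hp : IsStochastic Adm p)
    (hlam : 0 < lam) (x : S) :
    sInf ((fun a ↦ sSup (Jopt Adm p C lam '' {y | 0 < p x a y})) '' (Adm x : Set A))
      ≤ Jopt Adm p C lam x := by
  have := policy_nonempty hA
  refine le_ciInf fun π ↦ ?_
  obtain ⟨a, ha, hπa⟩ := exists_policy_pos π [] x
  refine (csInf_le ((Adm x : Set A).toFinite.image _).bddBelow ⟨a, ha, rfl⟩).trans
    (csSup_le ?_ ?_)
  · obtain ⟨y, hy⟩ := exists_pos_of_sum_eq_one (hp x a ha).2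
    exact ⟨_, y, hy, rfl⟩
  · rintro _ ⟨y, hy, rfl⟩
    exact (Jopt_le_Javg hp hlam _ y).trans (Javg_shiftPolicy_le hp hlam hπa hy)

lemma Jopt_le_sSup (hA : ∀ x, (Adm x).Nonempty) (hp : IsStochastic Adm p) (hlam : 0 < lam)
    {x : S} {a : A} (ha : a ∈ Adm x) :
    Jopt Adm p C lam x ≤ sSup (Jopt Adm p C lam '' {y | 0 < p x a y}) := by
  have := policy_nonempty hA
  refine le_of_forall_pos_le_add fun ε hε ↦ ?_
  choose Ps hPs using fun y ↦
    exists_lt_of_ciInf_lt (lt_add_of_pos_right (Jopt Adm p C lam y) hε)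
  let f := Function.update (fun s ↦ (hA s).choose) x a
  have hf : ∀ s, f s ∈ Adm s := by
    intro s
    by_cases hs : s = x
    · subst hs; simpa [f] using ha
    · simpa [f, hs] using (hA s).choose_spec
  refine (Jopt_le_Javg hp hlam _ x).trans (Javg_firstStepThen_le hp hlam hf Ps fun y hy ↦ ?_)
  rw [show f x = a from Function.update_self ..] at hy
  exact (hPs y).le.trans (add_le_add_left
    (le_csSup ((Set.toFinite _).image _).bddAbove ⟨y, hy, rfl⟩) ε)

end Optimal

/-- the min–max equation for the optimal risk-sensitive average cost. -/
theorem minmax_equation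
    (hA : ∀ x, (Adm x).Nonempty)
    (hp : ∀ (x : S), ∀ a ∈ Adm x, (∀ y, 0 ≤ p x a y) ∧ (∑ y, p x a y) = 1)
    (hlam : 0 < lam) (x : S) :
    Jopt Adm p C lam x =
      sInf ((fun a => sSup (Jopt Adm p C lam '' {y | 0 < p x a y})) '' (Adm x : Set A)) := by
  obtain ⟨a₀, ha₀⟩ := hA x
  refine le_antisymm (le_csInf ⟨_, a₀, ha₀, rfl⟩ ?_) (sInf_sSup_le_Jopt hA hp hlam x)
  rintro _ ⟨a, ha, rfl⟩
  exact Jopt_le_sSup hA hp hlam ha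

end RiskSensitive
end

section
/- Suppose g : S → ℝ satisfies g(x) = min_{a ∈ A(x)} max{ g(y) : p_{xy}(a) > 0 } for every x ∈ S. Fix x ∈ S and a policy δ such that P_x^δ[A_r ∈ B_g(X_r)] = 1 for every r ∈ ℕ. Then for each n ∈ ℕ, P_x^δ-almost surely g(X_{n+1}) ≤ g(X_n) ≤ ⋯ ≤ g(X_0) = g(x); that is, the process {g(X_t)} is nonincreasing almost surely. -/
open scoped Classical BigOperators ENNReal

namespace RiskSensitive

variable {S A : Type*} [Fintype S] [Fintype A]
variable (Adm : S → Finset A) (p : S → A → S → ℝ) (C : S → A → ℝ) (lam : ℝ)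

/-! On a trajectory of positive probability every action taken is in `B_g` of the current state
and every transition taken has positive probability, so `g` of the next state is at most the
maximum of `g` over the successors of that action, which is `g` of the current state. Since
cylinder probabilities are sums of nonnegative path weights adding up to one, an event has
probability one exactly when it holds on every path of positive probability. -/

section Trajectories

variable {σ α : Type*}

lemma stateAt_succ (x : σ) (l : List (α × σ)) {t : ℕ} (ht : t < l.length) :
    stateAt x l (t + 1) = l[t].2 := by
  simp only [stateAt, List.take_add_one, List.getElem?_eq_getElem ht, Option.toList_some,
    List.foldl_append, List.foldl_cons, List.foldl_nil]

lemma stateAt_take (x : σ) (l : List (α × σ)) {t k : ℕ} (htk : t ≤ k) :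
    stateAt x (l.take k) t = stateAt x l t := by
  rw [stateAt, stateAt, List.take_take, min_eq_left htk]

lemma le_of_mem_Bg [Finite σ] {Adm : σ → Finset α} {p : σ → α → σ → ℝ} {g : σ → ℝ}
    {x y : σ} {a : α} (ha : a ∈ Bg Adm p g x) (hy : 0 < p x a y) : g y ≤ g x := by
  rw [ha.2]
  exact le_csSup ((Set.toFinite _).image g).bddAbove ⟨y, hy, rfl⟩

end Trajectories

section Paths

variable {Adm} {p}

lemma pathProbAux_nonneg (hp : ∀ x, ∀ a ∈ Adm x, ∀ y, 0 ≤ p x a y) (π : Policy S A Adm)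
    (l : List (A × S)) (hist : List (S × A)) (x : S) :
    0 ≤ pathProbAux Adm p π hist x l := by
  induction l generalizing hist x with
  | nil => exact zero_le_one
  | cons q rest ih =>
    obtain ⟨a, y⟩ := q
    by_cases ha : a ∈ Adm x
    · exact mul_nonneg (mul_nonneg (π.nonneg _ _ _) (hp x a ha y)) (ih _ _)
    · simp [pathProbAux, π.supp hist x a ha]

lemma sum_pathProbAux_ofFn
    (hp : ∀ x, ∀ a ∈ Adm x, (∀ y, 0 ≤ p x a y) ∧ ∑ y, p x a y = 1) (π : Policy S A Adm)
    (m : ℕ) (hist : List (S × A)) (x : S) :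
    ∑ v : Fin m → A × S, pathProbAux Adm p π hist x (List.ofFn v) = 1 := by
  induction m generalizing hist x with
  | zero => simp [pathProbAux]
  | succ m ih =>
    rw [← (Fin.consEquiv fun _ => A × S).sum_comp, Fintype.sum_prod_type, Fintype.sum_prod_type]
    calc ∑ a, ∑ y, ∑ w : Fin m → A × S,
          pathProbAux Adm p π hist x (List.ofFn (Fin.consEquiv (fun _ => A × S) ((a, y), w)))
        = ∑ a, π.toFun hist x a * ∑ y, p x a y := by
          simp only [Fin.consEquiv_apply, List.ofFn_succ, Fin.cons_zero, Fin.cons_succ,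
            pathProbAux, ← Finset.mul_sum, ih, mul_one]
      _ = ∑ a, π.toFun hist x a := by
          refine Finset.sum_congr rfl fun a _ => ?_
          by_cases ha : a ∈ Adm x
          · rw [(hp x a ha).2, mul_one]
          · rw [π.supp hist x a ha, zero_mul]
      _ = 1 := π.sum_one hist x

lemma cylProb_eq_one_iff
    (hp : ∀ x, ∀ a ∈ Adm x, (∀ y, 0 ≤ p x a y) ∧ ∑ y, p x a y = 1) (π : Policy S A Adm)
    (x : S) {m : ℕ} (E : (Fin m → A × S) → Prop) :
    cylProb Adm p π x m E = 1 ↔ ∀ v, pathProb Adm p π x (List.ofFn v) ≠ 0 → E v := by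
  have hnonneg (v : Fin m → A × S) : 0 ≤ pathProb Adm p π x (List.ofFn v) :=
    pathProbAux_nonneg (fun x a ha => (hp x a ha).1) π _ [] x
  have hsplit : cylProb Adm p π x m E
      = 1 - ∑ v, if E v then 0 else pathProb Adm p π x (List.ofFn v) := by
    rw [← sum_pathProbAux_ofFn hp π m [] x, cylProb, eq_sub_iff_add_eq,
      ← Finset.sum_add_distrib]
    exact Finset.sum_congr rfl fun v _ => by split_ifs <;> simp [pathProb]
  rw [hsplit, sub_eq_self, Finset.sum_eq_zero_iff_of_nonneg fun v _ => by
    split_ifs <;> simp [hnonneg]]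
  refine forall_congr' fun v => ?_
  split_ifs with hE <;> simp [hE]

lemma pathProbAux_take_ne_zero (π : Policy S A Adm) {hist : List (S × A)} {x : S}
    {l : List (A × S)} (hl : pathProbAux Adm p π hist x l ≠ 0) (k : ℕ) :
    pathProbAux Adm p π hist x (l.take k) ≠ 0 := by
  induction l generalizing hist x k with
  | nil => simpa using hl
  | cons q rest ih =>
    cases k with
    | zero => exact one_ne_zero
    | succ k =>
      obtain ⟨a, y⟩ := q
      simp only [pathProbAux, List.take_succ_cons, ne_eq, mul_eq_zero, not_or] at hl ⊢
      exact ⟨hl.1, ih hl.2 k⟩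

lemma transition_ne_zero_of_pathProbAux_ne_zero (π : Policy S A Adm) {hist : List (S × A)}
    {x : S} {l : List (A × S)} (hl : pathProbAux Adm p π hist x l ≠ 0) {t : ℕ}
    (ht : t < l.length) :
    p (stateAt x l t) l[t].1 l[t].2 ≠ 0 := by
  induction l generalizing hist x t with
  | nil => simp at ht
  | cons q rest ih =>
    obtain ⟨a, y⟩ := q
    simp only [pathProbAux, ne_eq, mul_eq_zero, not_or] at hl
    cases t with
    | zero => exact hl.1.2
    | succ t => exact ih hl.2 (by simpa using ht)

lemma mem_of_forall_cylProb_eq_one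
    (hp : ∀ x, ∀ a ∈ Adm x, (∀ y, 0 ≤ p x a y) ∧ ∑ y, p x a y = 1) (π : Policy S A Adm)
    (x : S) (B : S → Set A)
    (hπ : ∀ r : ℕ, cylProb Adm p π x (r + 1)
      (fun v => (v (Fin.last r)).1 ∈ B (stateAt x (List.ofFn v) r)) = 1)
    {m : ℕ} (v : Fin m → A × S) (hv : pathProb Adm p π x (List.ofFn v) ≠ 0)
    (t : ℕ) (ht : t < m) :
    (v ⟨t, ht⟩).1 ∈ B (stateAt x (List.ofFn v) t) := by
  have hprefix : pathProb Adm p π x (List.ofFn (Fin.take (t + 1) ht v)) ≠ 0 := by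
    rw [Fin.ofFn_take_eq_take_ofFn]
    exact pathProbAux_take_ne_zero π hv _
  have hmem := (cylProb_eq_one_iff hp π x _).1 (hπ t) _ hprefix
  rwa [Fin.ofFn_take_eq_take_ofFn, stateAt_take _ _ t.le_succ] at hmem

end Paths

theorem g_nonincreasing
    (hp : ∀ (x : S), ∀ a ∈ Adm x, (∀ y, 0 ≤ p x a y) ∧ (∑ y, p x a y) = 1)
    (g : S → ℝ)
    (x : S) (δ : Policy S A Adm)
    (hδ : ∀ r : ℕ, cylProb Adm p δ x (r + 1)
      (fun v => (v (Fin.last r)).1 ∈ Bg Adm p g (stateAt x (List.ofFn v) r)) = 1)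
    (n : ℕ) :
    cylProb Adm p δ x (n + 1)
      (fun v => ∀ t ≤ n,
        g (stateAt x (List.ofFn v) (t + 1)) ≤ g (stateAt x (List.ofFn v) t)) = 1 := by
  rw [cylProb_eq_one_iff hp]
  intro v hv t ht
  have ht' : t < (List.ofFn v).length := by rw [List.length_ofFn]; omega
  have hB := mem_of_forall_cylProb_eq_one hp δ x _ hδ v hv t (by omega)
  have hstep := transition_ne_zero_of_pathProbAux_ne_zero δ hv ht'
  simp only [List.getElem_ofFn] at hstep
  rw [stateAt_succ x _ ht', List.getElem_ofFn]
  exact le_of_mem_Bg hB (lt_of_le_of_ne ((hp _ _ hB.1).1 _) (Ne.symm hstep))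

end RiskSensitive
end
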